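/- arXiv:1710.11299 — 2 statements merged into one kernel-verified Lean document; each statement's English description precedes it below -/
import Mathlib

section
/- Uniform squeezing for bounded domain covers: let D ⊂ ℂⁿ be a bounded domain that is the universal cover of a compact complex manifold X (i.e., there is a group Γ of automorphisms of D acting freely and properly discontinuously with compact quotient). Then there exist constants 0 < a < b < ∞ such that for every x ∈ D there is a holomorphic embedding φ_x : D → ℂⁿ with φ_x(x) = 0 and B^n_a ⊆ φ_x(D) ⊆ B^n_b. -/
open Metric Complex
noncomputable section
abbrev En (n : ℕ) := EuclideanSpace ℂ (Fin n)
noncomputable def jacDet {n : ℕ} (f : En n → En n) (p : En n) : ℂ :=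
  LinearMap.det ((fderiv ℂ f p).toLinearMap)
noncomputable def vC {n : ℕ} (M : Set (En n)) (p : En n) : ENNReal :=
  ⨆ f ∈ {f : En n → En n | DifferentiableOn ℂ f M ∧ Set.MapsTo f M (ball 0 1) ∧ f p = 0},
    ENNReal.ofReal (‖jacDet f p‖ ^ 2)
noncomputable def vK {n : ℕ} (M : Set (En n)) (p : En n) : ENNReal :=
  ⨅ f ∈ {f : En n → En n | DifferentiableOn ℂ f (ball 0 1) ∧ Set.MapsTo f (ball 0 1) M ∧ f 0 = p},
    (ENNReal.ofReal (‖jacDet f 0‖ ^ 2))⁻¹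
noncomputable def leviForm {E : Type*} [NormedAddCommGroup E] [NormedSpace ℂ E] (u : E → ℝ) (z ζ : E) : ℝ :=
  (1/4) * ((iteratedFDeriv ℝ 2 u z) ![ζ, ζ] + (iteratedFDeriv ℝ 2 u z) ![Complex.I • ζ, Complex.I • ζ])

theorem uniform_squeezing {n : ℕ} (D : Set (En n)) (hD : IsOpen D) (hne : D.Nonempty)
    (hbd : Bornology.IsBounded D)
    (G : Set (En n → En n))
    (hG : ∀ g ∈ G, DifferentiableOn ℂ g D ∧ Set.BijOn g D D ∧
      ∃ ginv : En n → En n, DifferentiableOn ℂ ginv D ∧ Set.BijOn ginv D D ∧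
        Set.EqOn (ginv ∘ g) id D)
    (hfree : ∀ g ∈ G, ∀ x ∈ D, g x = x → Set.EqOn g id D)
    (A : Set (En n)) (hA : IsCompact A) (hAD : A ⊆ D)
    (hquot : ∀ x ∈ D, ∃ g ∈ G, g x ∈ A) :
    ∃ a b : ℝ, 0 < a ∧ a < b ∧ ∀ x ∈ D, ∃ φ : En n → En n,
      DifferentiableOn ℂ φ D ∧ Set.InjOn φ D ∧ φ x = 0 ∧
      ball 0 a ⊆ φ '' D ∧ φ '' D ⊆ ball 0 b := by
  obtain ⟨δ, δpos, hthick⟩ := hA.exists_thickening_subset_open hD hAD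
  obtain ⟨R, hR⟩ := hbd.subset_ball 0
  obtain ⟨x0, hx0⟩ := hne
  have hR0 : 0 < R := lt_of_le_of_lt dist_nonneg (mem_ball.mp (hR hx0))
  refine ⟨δ, δ + 2*R, δpos, by linarith, ?_⟩
  intro x hx
  obtain ⟨g, hgG, hgA⟩ := hquot x hx
  obtain ⟨hgdiff, hgbij, _⟩ := hG g hgG
  refine ⟨fun y => g y - g x, hgdiff.sub_const _, ?_, by simp, ?_, ?_⟩
  · intro y hy z hz h
    exact hgbij.injOn hy hz (by simpa [sub_left_inj] using h)
  · intro v hv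
    have hvD : v + g x ∈ D := by
      apply hthick
      apply ball_subset_thickening hgA δ
      simpa [mem_ball, dist_eq_norm] using mem_ball.mp hv
    obtain ⟨y, hy, hgy⟩ := hgbij.surjOn hvD
    exact ⟨y, hy, by simp [hgy]⟩
  · rintro w ⟨y, hy, rfl⟩
    have h1 : dist (g y) 0 < R := mem_ball.mp (hR (hgbij.mapsTo hy))
    have h2 : dist (g x) 0 < R := mem_ball.mp (hR (hAD hgA))
    have : dist (g y) (g x) < 2 * R := by
      calc dist (g y) (g x) ≤ dist (g y) 0 + dist 0 (g x) := dist_triangle _ _ _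
        _ < R + R := by rw [dist_comm 0]; exact add_lt_add h1 h2
        _ = 2*R := by ring
    simp only [mem_ball, dist_eq_norm, sub_zero]
    calc ‖g y - g x‖ = dist (g y) (g x) := (dist_eq_norm _ _).symm
      _ < 2*R := this
      _ ≤ δ + 2*R := by linarith
end
end

section
/- Under uniform squeezing, a universal-covered bounded domain is Carathéodory measure hyperbolic: if D ⊂ ℂⁿ is a bounded domain covering a compact complex manifold, then constants 0 < a < b from the uniform squeezing property give v^C_D(p) ≥ 1/b^{2n} > 0 and v^K_D(p) ≤ 1/a^{2n} < ∞ at every point p ∈ D (computed in squeezing coordinates centered at p). -/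
open Metric Complex
noncomputable section
/-! A point `p` of `D` is moved by an automorphism `g` into the compact set `A`,
which lies at some distance `r > 0` from the boundary of `D`; the translate `z ↦ g z - g p` then
squeezes `D` between `ball 0 r` and a ball whose radius depends only on the size of `D`.
Scalings `z ↦ c • z` between these balls and the unit ball are admissible in the definitions
of `vC` and `vK`, and their Jacobian determinant is `c ^ n`. -/

section Translate

variable {E : Type*} [NormedAddCommGroup E]

lemma ball_zero_subset_image_sub_const {D : Set E} {q : E} {r : ℝ} (h : ball q r ⊆ D) :
    ball 0 r ⊆ (· - q) '' D := fun z hz =>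
  ⟨z + q, h (by simpa [dist_eq_norm] using hz), add_sub_cancel_right z q⟩

lemma image_sub_const_subset_closedBall {D : Set E} {q : E} {R : ℝ}
    (hD : D ⊆ closedBall 0 R) (hq : q ∈ D) : (· - q) '' D ⊆ closedBall 0 (2 * R) := by
  rintro _ ⟨z, hz, rfl⟩
  have hzR : ‖z‖ ≤ R := mem_closedBall_zero_iff.mp (hD hz)
  have hqR : ‖q‖ ≤ R := mem_closedBall_zero_iff.mp (hD hq)
  rw [mem_closedBall_zero_iff]
  linarith [norm_sub_le z q]

end Translate

section Squeezing

variable {𝕜 : Type*} [NontriviallyNormedField 𝕜] {E : Type*} [NormedAddCommGroup E]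
  [NormedSpace 𝕜 E]

theorem exists_uniform_squeezing_of_cocompact {D : Set E} (hD : IsOpen D)
    (hbd : Bornology.IsBounded D) {G : Set (E → E)}
    (hG : ∀ g ∈ G, DifferentiableOn 𝕜 g D ∧ Set.BijOn g D D)
    {A : Set E} (hA : IsCompact A) (hAD : A ⊆ D) (hquot : ∀ x ∈ D, ∃ g ∈ G, g x ∈ A) :
    ∃ a b : ℝ, 0 < a ∧ a < b ∧ ∀ p ∈ D, ∃ φ : E → E,
      DifferentiableOn 𝕜 φ D ∧ Set.InjOn φ D ∧ φ p = 0 ∧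
      ball 0 a ⊆ φ '' D ∧ φ '' D ⊆ ball 0 b := by
  obtain ⟨r, hr, hthick⟩ := hA.exists_thickening_subset_open hD hAD
  obtain ⟨R, hR, hDR⟩ := hbd.subset_closedBall_lt 0 0
  refine ⟨r, 2 * R + r, hr, by linarith, fun p hp => ?_⟩
  obtain ⟨g, hgG, hgA⟩ := hquot p hp
  obtain ⟨hgdiff, hgbij⟩ := hG g hgG
  have himage : (fun z => g z - g p) '' D = (· - g p) '' D := by
    rw [← Set.image_image (· - g p) g D, hgbij.image_eq]
  refine ⟨fun z => g z - g p, hgdiff.sub_const _,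
    fun x hx y hy hxy => hgbij.injOn hx hy (sub_left_inj.mp hxy), sub_self _, ?_, ?_⟩
  · rw [himage]
    exact ball_zero_subset_image_sub_const
      ((ball_subset_thickening hgA r).trans hthick)
  · rw [himage]
    exact (image_sub_const_subset_closedBall hDR (hgbij.mapsTo hp)).trans
      (closedBall_subset_ball (by linarith))

end Squeezing

lemma mapsTo_smul_ball {𝕜 : Type*} [NormedField 𝕜] {E : Type*} [SeminormedAddCommGroup E]
    [NormedSpace 𝕜 E] {c : 𝕜} (hc : c ≠ 0) (r : ℝ) :
    Set.MapsTo (c • ·) (ball (0 : E) r) (ball 0 (‖c‖ * r)) := fun z hz => by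
  simpa [_root_.smul_ball hc] using Set.smul_mem_smul_set (a := c) hz

lemma jacDet_const_smul {n : ℕ} (c : ℂ) (p : En n) :
    jacDet (fun z : En n => c • z) p = c ^ n := by
  have hlin : (fun z : En n => c • z) = ⇑(c • ContinuousLinearMap.id ℂ (En n)) := rfl
  rw [jacDet, hlin, ContinuousLinearMap.fderiv, ContinuousLinearMap.toLinearMap_smul,
    ContinuousLinearMap.coe_id, LinearMap.det_smul, LinearMap.det_id,
    finrank_euclideanSpace_fin, mul_one]

lemma norm_jacDet_const_smul_sq {n : ℕ} (c : ℂ) (p : En n) :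
    ‖jacDet (fun z : En n => c • z) p‖ ^ 2 = ‖c‖ ^ (2 * n) := by
  rw [jacDet_const_smul, norm_pow, ← pow_mul, mul_comm]

lemma ofReal_inv_pow_le_vC {n : ℕ} {M : Set (En n)} {b : ℝ} (hb : 0 < b)
    (hM : M ⊆ ball 0 b) : ENNReal.ofReal (1 / b ^ (2 * n)) ≤ vC M 0 := by
  have hc : ((b : ℂ)⁻¹) ≠ 0 := inv_ne_zero (ofReal_ne_zero.mpr hb.ne')
  have hnorm : ‖((b : ℂ)⁻¹)‖ = b⁻¹ := by rw [norm_inv, norm_real, Real.norm_of_nonneg hb.le]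
  have hmaps : Set.MapsTo (fun z : En n => (b : ℂ)⁻¹ • z) (ball 0 b) (ball 0 1) := by
    have := mapsTo_smul_ball (E := En n) hc b
    rwa [hnorm, inv_mul_cancel₀ hb.ne'] at this
  have hf : (fun z : En n => (b : ℂ)⁻¹ • z) ∈ {f : En n → En n | DifferentiableOn ℂ f M ∧
      Set.MapsTo f M (ball 0 1) ∧ f 0 = 0} :=
    ⟨by fun_prop, (hmaps.mono_left hM), smul_zero _⟩
  calc ENNReal.ofReal (1 / b ^ (2 * n))
      = ENNReal.ofReal (‖jacDet (fun z : En n => (b : ℂ)⁻¹ • z) 0‖ ^ 2) := by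
        rw [norm_jacDet_const_smul_sq, hnorm, inv_pow, one_div]
    _ ≤ vC M 0 := le_iSup₂ (f := fun f _ => ENNReal.ofReal (‖jacDet f 0‖ ^ 2)) _ hf

lemma vK_le_ofReal_inv_pow {n : ℕ} {M : Set (En n)} {a : ℝ} (ha : 0 < a)
    (hM : ball 0 a ⊆ M) : vK M 0 ≤ ENNReal.ofReal (1 / a ^ (2 * n)) := by
  have hnorm : ‖(a : ℂ)‖ = a := by rw [norm_real, Real.norm_of_nonneg ha.le]
  have hmaps : Set.MapsTo (fun z : En n => (a : ℂ) • z) (ball 0 1) (ball 0 a) := by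
    have := mapsTo_smul_ball (E := En n) (ofReal_ne_zero.mpr ha.ne') 1
    rwa [hnorm, mul_one] at this
  have hf : (fun z : En n => (a : ℂ) • z) ∈ {f : En n → En n |
      DifferentiableOn ℂ f (ball 0 1) ∧ Set.MapsTo f (ball 0 1) M ∧ f 0 = 0} :=
    ⟨by fun_prop, hmaps.mono_right hM, smul_zero _⟩
  calc vK M 0 ≤ (ENNReal.ofReal (‖jacDet (fun z : En n => (a : ℂ) • z) 0‖ ^ 2))⁻¹ :=
        iInf₂_le (f := fun f _ => (ENNReal.ofReal (‖jacDet f 0‖ ^ 2))⁻¹) _ hf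
    _ = ENNReal.ofReal (1 / a ^ (2 * n)) := by
        rw [norm_jacDet_const_smul_sq, hnorm, one_div,
          ENNReal.ofReal_inv_of_pos (by positivity)]

theorem squeezing_domain_measure_hyperbolic_general {n : ℕ} (D : Set (En n)) (hD : IsOpen D)
    (hbd : Bornology.IsBounded D)
    (G : Set (En n → En n))
    (hG : ∀ g ∈ G, DifferentiableOn ℂ g D ∧ Set.BijOn g D D ∧
      ∃ ginv : En n → En n, DifferentiableOn ℂ ginv D ∧ Set.BijOn ginv D D ∧
        Set.EqOn (ginv ∘ g) id D)
    (A : Set (En n)) (hA : IsCompact A) (hAD : A ⊆ D)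
    (hquot : ∀ x ∈ D, ∃ g ∈ G, g x ∈ A) :
    ∃ a b : ℝ, 0 < a ∧ a < b ∧ ∀ p ∈ D, ∃ φ : En n → En n,
      DifferentiableOn ℂ φ D ∧ Set.InjOn φ D ∧ φ p = 0 ∧
      ball 0 a ⊆ φ '' D ∧ φ '' D ⊆ ball 0 b ∧
      ENNReal.ofReal (1 / b ^ (2 * n)) ≤ vC (φ '' D) 0 ∧
      vK (φ '' D) 0 ≤ ENNReal.ofReal (1 / a ^ (2 * n)) := by
  obtain ⟨a, b, ha, hab, hsqueeze⟩ := exists_uniform_squeezing_of_cocompact hD hbd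
    (fun g hg => ⟨(hG g hg).1, (hG g hg).2.1⟩) hA hAD hquot
  refine ⟨a, b, ha, hab, fun p hp => ?_⟩
  obtain ⟨φ, hφdiff, hφinj, hφp, hinner, houter⟩ := hsqueeze p hp
  exact ⟨φ, hφdiff, hφinj, hφp, hinner, houter,
    ofReal_inv_pow_le_vC (ha.trans hab) houter, vK_le_ofReal_inv_pow ha hinner⟩

theorem squeezing_domain_measure_hyperbolic {n : ℕ} (D : Set (En n)) (hD : IsOpen D)
    (hne : D.Nonempty) (hbd : Bornology.IsBounded D)
    (G : Set (En n → En n))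
    (hG : ∀ g ∈ G, DifferentiableOn ℂ g D ∧ Set.BijOn g D D ∧
      ∃ ginv : En n → En n, DifferentiableOn ℂ ginv D ∧ Set.BijOn ginv D D ∧
        Set.EqOn (ginv ∘ g) id D)
    (A : Set (En n)) (hA : IsCompact A) (hAD : A ⊆ D)
    (hquot : ∀ x ∈ D, ∃ g ∈ G, g x ∈ A) :
    ∃ a b : ℝ, 0 < a ∧ a < b ∧ ∀ p ∈ D, ∃ φ : En n → En n,
      DifferentiableOn ℂ φ D ∧ Set.InjOn φ D ∧ φ p = 0 ∧
      ball 0 a ⊆ φ '' D ∧ φ '' D ⊆ ball 0 b ∧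
      ENNReal.ofReal (1 / b ^ (2 * n)) ≤ vC (φ '' D) 0 ∧
      vK (φ '' D) 0 ≤ ENNReal.ofReal (1 / a ^ (2 * n)) :=
  squeezing_domain_measure_hyperbolic_general D hD hbd G hG A hA hAD hquot
end
end
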